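/- arXiv:2305.03384 — 2 statements merged into one kernel-verified Lean document; each statement's English description precedes it below -/
import Mathlib

section
/- Let k be an integer with 1 ≤ k ≤ 6, let l be an integer with 0 ≤ l ≤ 2k, and let θ ∈ (π/2, π) satisfy sin θ > 1/2. Then there exists c > 0 such that for every τ > 0 and every z ∈ ℂ with z ≠ 0, |arg z| ≤ θ and |z|·τ ≤ π/sin θ (so that e^{−zτ} ≠ 1), the following holds: if l = 0 or l is odd then |(γ_l(e^{−zτ})/l!)·τ^{l+1} − z^{−(l+1)}| ≤ c·τ^{l+1}, and if l ≥ 2 is even then |(γ_l(e^{−zτ})/l!)·τ^{l+1} − z^{−(l+1)}| ≤ c·τ^{l+2}·|z|. -/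
open Complex Real

/-- The coefficients `a_{l,j}`: `a_{0,0} = 1`, `a_{0,j} = 0` for `j ≥ 1`, and for `l ≥ 1`:
`a_{l,0} = a_{l,l+1} = 0` and `a_{l,j} = j·a_{l−1,j} + (l+1−j)·a_{l−1,j−1}` for `1 ≤ j ≤ l`
(extended by zero outside the range `0 ≤ j ≤ l+1`). -/
def aCoef : ℕ → ℕ → ℕ
  | 0, j => if j = 0 then 1 else 0
  | l + 1, j => if j = 0 then 0 else j * aCoef l j + (l + 2 - j) * aCoef l (j - 1)

/-- `γ_l(ξ) = (Σ_{j=0}^{l} a_{l,j} ξ^{l+1−j})/(1−ξ)^{l+1}`, which equals `Σ_{n=1}^∞ n^l ξ^n`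
for `|ξ| < 1`. -/
noncomputable def gammaPoly (l : ℕ) (ξ : ℂ) : ℂ :=
  (∑ j ∈ Finset.range (l + 1), (aCoef l j : ℂ) * ξ ^ (l + 1 - j)) / (1 - ξ) ^ (l + 1)

open Filter Set Metric Topology

/-!
The function `h(w) = 1/(e^w - 1) - 1/w` has a removable singularity at `0` and is holomorphic on
`|w| < 2π`. Since `ξ γ_l'(ξ) = γ_{l+1}(ξ)` and `γ_0(e^{-w}) = 1/(e^w - 1)`, differentiating `l`
times gives `γ_l(e^{-w}) = l! w^{-(l+1)} + (-1)^l h^{(l)}(w)`. With `w = zτ` the error is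
`(-1)^l h^{(l)}(zτ) τ^{l+1} / l!`, and `|zτ| ≤ π / sin θ < 2π` keeps `zτ` in a compact disc where
`h^{(l)}` is bounded. For even `l ≥ 2`, `h(w) + h(-w) = -1` makes `h^{(l)}` odd, so
`h^{(l)}(0) = 0` and `h^{(l)}(w) = O(|w|)`, which gives the extra factor `τ |z|`.
-/

lemma aCoef_eq_zero_of_lt : ∀ {l j : ℕ}, l < j → aCoef l j = 0
  | 0, j, h => by simp [aCoef, h.ne']
  | l + 1, j, h => by
    simp [aCoef, Nat.ne_zero_of_lt h, aCoef_eq_zero_of_lt (show l < j by omega),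
      aCoef_eq_zero_of_lt (show l < j - 1 by omega)]

lemma aCoef_succ_succ (l j : ℕ) :
    aCoef (l + 1) (j + 1) = (j + 1) * aCoef l (j + 1) + (l + 1 - j) * aCoef l j := by
  simp only [aCoef, Nat.succ_ne_zero, if_false, Nat.add_sub_cancel]
  congr 2
  omega

noncomputable def gammaNum (l : ℕ) (ξ : ℂ) : ℂ :=
  ∑ j ∈ Finset.range (l + 1), (aCoef l j : ℂ) * ξ ^ (l + 1 - j)

lemma gammaPoly_eq_div (l : ℕ) (ξ : ℂ) : gammaPoly l ξ = gammaNum l ξ / (1 - ξ) ^ (l + 1) := rfl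

lemma hasDerivAt_gammaNum (l : ℕ) (ξ : ℂ) :
    HasDerivAt (gammaNum l)
      (∑ j ∈ Finset.range (l + 1), (aCoef l j : ℂ) * ((l + 1 - j : ℕ) : ℂ) * ξ ^ (l - j)) ξ := by
  refine HasDerivAt.fun_sum fun j _ => ?_
  simpa [mul_assoc, Nat.sub_sub, add_comm 1] using
    (hasDerivAt_pow (l + 1 - j) ξ).const_mul (aCoef l j : ℂ)

lemma gammaNum_succ (l : ℕ) (ξ : ℂ) :
    gammaNum (l + 1) ξ = ξ * ((1 - ξ) * (∑ j ∈ Finset.range (l + 1),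
        (aCoef l j : ℂ) * ((l + 1 - j : ℕ) : ℂ) * ξ ^ (l - j)) + ((l : ℂ) + 1) * gammaNum l ξ) := by
  have hterm (j : ℕ) : (aCoef (l + 1) (j + 1) : ℂ) * ξ ^ (l + 1 + 1 - (j + 1))
      = ((j : ℂ) + 1) * aCoef l (j + 1) * ξ ^ (l + 1 - j)
        + ((l + 1 - j : ℕ) : ℂ) * aCoef l j * ξ ^ (l + 1 - j) := by
    rw [aCoef_succ_succ, Nat.add_sub_add_right]
    push_cast
    ring
  have hshift : ∑ j ∈ Finset.range (l + 1), ((j : ℂ) + 1) * aCoef l (j + 1) * ξ ^ (l + 1 - j)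
      = ∑ j ∈ Finset.range (l + 1), (j : ℂ) * aCoef l j * ξ ^ (l + 2 - j) := by
    have h := Finset.sum_range_succ' (fun j => (j : ℂ) * aCoef l j * ξ ^ (l + 2 - j)) (l + 1)
    rw [Finset.sum_range_succ, aCoef_eq_zero_of_lt (Nat.lt_succ_self l)] at h
    simpa using h.symm
  rw [gammaNum, Finset.sum_range_succ', show aCoef (l + 1) 0 = 0 from rfl, Nat.cast_zero,
    zero_mul, add_zero]
  simp only [hterm]
  rw [Finset.sum_add_distrib, hshift, ← Finset.sum_add_distrib, gammaNum, Finset.mul_sum,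
    Finset.mul_sum, ← Finset.sum_add_distrib, Finset.mul_sum]
  refine Finset.sum_congr rfl fun j hj => ?_
  obtain ⟨i, rfl⟩ := Nat.exists_eq_add_of_le (Finset.mem_range_succ_iff.1 hj)
  rw [show j + i + 2 - j = i + 2 by omega, show j + i + 1 - j = i + 1 by omega,
    Nat.add_sub_cancel_left]
  push_cast
  ring

lemma hasDerivAt_gammaPoly (l : ℕ) {ξ : ℂ} (hξ0 : ξ ≠ 0) (hξ1 : ξ ≠ 1) :
    HasDerivAt (gammaPoly l) (gammaPoly (l + 1) ξ / ξ) ξ := by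
  have h1ξ : 1 - ξ ≠ 0 := sub_ne_zero.2 hξ1.symm
  have hden : HasDerivAt (fun x : ℂ => (1 - x) ^ (l + 1)) (((l + 1 : ℕ) : ℂ) * (1 - ξ) ^ l * -1) ξ :=
    ((hasDerivAt_id ξ).const_sub 1).pow (l + 1)
  refine ((hasDerivAt_gammaNum l ξ).div hden (pow_ne_zero _ h1ξ)).congr_deriv ?_
  rw [gammaPoly_eq_div, gammaNum_succ]
  field_simp
  push_cast
  ring

lemma hasDerivAt_gammaPoly_exp_neg (l : ℕ) {w : ℂ} (hw : cexp w ≠ 1) :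
    HasDerivAt (fun t => gammaPoly l (cexp (-t))) (-gammaPoly (l + 1) (cexp (-w))) w := by
  have hξ1 : cexp (-w) ≠ 1 := by rwa [Complex.exp_neg, inv_ne_one]
  have hexp : HasDerivAt (fun t => cexp (-t)) (cexp (-w) * -1) w :=
    (Complex.hasDerivAt_exp (-w)).comp w (hasDerivAt_neg w)
  refine ((hasDerivAt_gammaPoly l (Complex.exp_ne_zero _) hξ1).comp w hexp).congr_deriv ?_
  field_simp [Complex.exp_ne_zero]

lemma gammaPoly_zero (ξ : ℂ) : gammaPoly 0 ξ = ξ / (1 - ξ) := by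
  simp [gammaPoly, aCoef]

lemma gammaPoly_zero_exp_neg (w : ℂ) : gammaPoly 0 (cexp (-w)) = (cexp w - 1)⁻¹ := by
  rw [gammaPoly_zero, Complex.exp_neg]
  rcases eq_or_ne (cexp w) 1 with hw | hw
  · simp [hw]
  · have : cexp w - 1 ≠ 0 := sub_ne_zero.2 hw
    field_simp

lemma exp_ne_one_of_norm_lt {w : ℂ} (hw0 : w ≠ 0) (hw : ‖w‖ < 2 * π) : cexp w ≠ 1 := by
  intro h
  obtain ⟨n, rfl⟩ := Complex.exp_eq_one_iff.1 h
  have hn : n ≠ 0 := by rintro rfl; simp at hw0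
  have : (1 : ℝ) ≤ |(n : ℝ)| := by exact_mod_cast Int.one_le_abs hn
  rw [norm_mul, norm_mul, norm_mul, Complex.norm_intCast, Complex.norm_real, Complex.norm_I,
    Real.norm_of_nonneg pi_pos.le] at hw
  norm_num at hw
  nlinarith [pi_pos]

lemma inv_exp_sub_one_add_inv_exp_neg_sub_one {w : ℂ} (hw : cexp w ≠ 1) :
    (cexp w - 1)⁻¹ + (cexp (-w) - 1)⁻¹ = -1 := by
  have h1 : cexp w - 1 ≠ 0 := sub_ne_zero.2 hw
  have h3 : (cexp w)⁻¹ - 1 ≠ 0 := by rwa [sub_ne_zero, inv_ne_one]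
  rw [Complex.exp_neg]
  field_simp
  ring

/-- `(dslope cexp 0 w)⁻¹` is `w / (e^w - 1)` off `0` and `1` at `0`, so its slope at `0` is
`1/(e^w - 1) - 1/w` off `0`, with the removable singularity already filled in. -/
noncomputable def expRegular : ℂ → ℂ := dslope (fun w => (dslope cexp 0 w)⁻¹) 0

lemma dslope_exp_zero_ne_zero {w : ℂ} (hw : ‖w‖ < 2 * π) : dslope cexp 0 w ≠ 0 := by
  rcases eq_or_ne w 0 with rfl | hw0
  · simp [dslope_same]
  · rw [dslope_of_ne _ hw0, slope_def_field, sub_zero, Complex.exp_zero]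
    exact div_ne_zero (sub_ne_zero.2 (exp_ne_one_of_norm_lt hw0 hw)) hw0

lemma expRegular_of_ne_zero {w : ℂ} (hw : w ≠ 0) : expRegular w = (cexp w - 1)⁻¹ - w⁻¹ := by
  rw [expRegular, dslope_of_ne _ hw, slope_def_field, dslope_of_ne _ hw, dslope_same,
    slope_def_field, Complex.deriv_exp, Complex.exp_zero, inv_one, sub_zero]
  rcases eq_or_ne (cexp w - 1) 0 with h | h
  · simp [h, neg_div]
  · field_simp

lemma differentiableOn_expRegular : DifferentiableOn ℂ expRegular (ball 0 (2 * π)) := by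
  have hball : ball (0 : ℂ) (2 * π) ∈ 𝓝 0 := ball_mem_nhds 0 (by positivity)
  refine (differentiableOn_dslope hball).2 (DifferentiableOn.inv ?_ fun w hw => ?_)
  · exact ((differentiableOn_dslope univ_mem).2 Complex.differentiable_exp.differentiableOn).mono
      (subset_univ _)
  · exact dslope_exp_zero_ne_zero (mem_ball_zero_iff.1 hw)

lemma expRegular_neg_eventuallyEq :
    (fun w => expRegular (-w)) =ᶠ[𝓝 0] fun w => -1 - expRegular w := by
  have hball : ball (0 : ℂ) (2 * π) ∈ 𝓝 0 := ball_mem_nhds 0 (by positivity)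
  have hcont : ContinuousAt expRegular 0 :=
    (differentiableOn_expRegular.differentiableAt hball).continuousAt
  have hcont_neg : ContinuousAt (fun w => expRegular (-w)) 0 :=
    hcont.comp_of_eq continuousAt_neg neg_zero
  refine (hcont_neg.eventuallyEq_nhds_iff_eventuallyEq_nhdsNE (continuousAt_const.sub hcont)).1 ?_
  filter_upwards [self_mem_nhdsWithin, mem_nhdsWithin_of_mem_nhds hball] with w (hw0 : w ≠ 0) hw
  show expRegular (-w) = -1 - expRegular w
  rw [expRegular_of_ne_zero hw0, expRegular_of_ne_zero (neg_ne_zero.2 hw0),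
    ← inv_exp_sub_one_add_inv_exp_neg_sub_one (exp_ne_one_of_norm_lt hw0 (mem_ball_zero_iff.1 hw)),
    inv_neg]
  ring

lemma differentiableOn_iteratedDeriv_expRegular (l : ℕ) :
    DifferentiableOn ℂ (iteratedDeriv l expRegular) (ball 0 (2 * π)) := by
  rw [iteratedDeriv_eq_iterate]
  exact ((differentiableOn_expRegular.analyticOnNhd isOpen_ball).iterated_deriv l).differentiableOn

lemma iteratedDeriv_expRegular_zero_of_even {l : ℕ} (hl : l ≠ 0) (he : Even l) :
    iteratedDeriv l expRegular 0 = 0 := by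
  have h := expRegular_neg_eventuallyEq.iteratedDeriv_eq l
  rw [iteratedDeriv_comp_neg, iteratedDeriv_const_sub (Nat.pos_of_ne_zero hl), iteratedDeriv_neg,
    he.neg_one_pow, one_smul, neg_zero] at h
  exact CharZero.eq_neg_self_iff.1 h

lemma iteratedDeriv_expRegular (l : ℕ) {w : ℂ} (hw : w ∈ ball (0 : ℂ) (2 * π) \ {0}) :
    iteratedDeriv l expRegular w
      = (-1) ^ l * (gammaPoly l (cexp (-w)) - l.factorial * w ^ (-(l + 1 : ℤ))) := by
  induction l generalizing w with
  | zero =>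
    rw [iteratedDeriv_zero, expRegular_of_ne_zero hw.2, gammaPoly_zero_exp_neg]
    simp [zpow_neg]
  | succ l ih =>
    have hw0 : w ≠ 0 := hw.2
    have hU : IsOpen (ball (0 : ℂ) (2 * π) \ {0}) := isOpen_ball.sdiff isClosed_singleton
    have hγ := (hasDerivAt_gammaPoly_exp_neg l
      (exp_ne_one_of_norm_lt hw0 (mem_ball_zero_iff.1 hw.1))).fun_sub
      ((hasDerivAt_zpow (-(l + 1 : ℤ)) w (Or.inl hw0)).const_mul (l.factorial : ℂ))
    have hev : iteratedDeriv l expRegular =ᶠ[𝓝 w] fun t =>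
        (-1) ^ l * (gammaPoly l (cexp (-t)) - l.factorial * t ^ (-(l + 1 : ℤ))) :=
      eventually_of_mem (hU.mem_nhds hw) fun t ht => ih ht
    rw [iteratedDeriv_succ, hev.deriv_eq, (hγ.const_mul _).deriv, Nat.factorial_succ,
      show -(l + 1 : ℤ) - 1 = -((l + 1 : ℕ) + 1 : ℤ) by push_cast; ring]
    push_cast
    ring

lemma norm_gammaPoly_sub_zpow_le (l : ℕ) {τ : ℝ} (hτ : 0 < τ) {z : ℂ} (hz : z ≠ 0)
    (hzτ : ‖z‖ * τ < 2 * π) :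
    ‖gammaPoly l (cexp (-z * τ)) / l.factorial * (τ : ℂ) ^ (l + 1) - z ^ (-(l + 1 : ℤ))‖
      ≤ ‖iteratedDeriv l expRegular (z * τ)‖ * τ ^ (l + 1) := by
  have hτ0 : (τ : ℂ) ≠ 0 := ofReal_ne_zero.2 hτ.ne'
  have hnorm : ‖z * τ‖ = ‖z‖ * τ := by rw [norm_mul, norm_real, Real.norm_of_nonneg hτ.le]
  have hw : z * τ ∈ ball (0 : ℂ) (2 * π) \ {0} :=
    ⟨mem_ball_zero_iff.2 (hnorm ▸ hzτ), mul_ne_zero hz hτ0⟩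
  have hsign : ((-1 : ℂ) ^ l) ^ 2 = 1 := by rw [← pow_mul, mul_comm, pow_mul, neg_one_sq, one_pow]
  have hdiff : gammaPoly l (cexp (-z * τ)) / l.factorial * (τ : ℂ) ^ (l + 1) - z ^ (-(l + 1 : ℤ))
      = (-1) ^ l * iteratedDeriv l expRegular (z * τ) * (τ : ℂ) ^ (l + 1) / l.factorial := by
    rw [iteratedDeriv_expRegular l hw, neg_mul, mul_zpow, zpow_neg, zpow_neg,
      show ((l : ℤ) + 1) = ((l + 1 : ℕ) : ℤ) by push_cast; ring, zpow_natCast, zpow_natCast]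
    have hfact0 : (l.factorial : ℂ) ≠ 0 := Nat.cast_ne_zero.2 l.factorial_ne_zero
    field_simp
    rw [hsign, mul_one]
  have hfact : (1 : ℝ) ≤ l.factorial := by exact_mod_cast l.factorial_pos
  rw [hdiff, norm_div, norm_mul, norm_mul, norm_pow, norm_neg, norm_one, one_pow, one_mul,
    norm_pow, norm_real, Real.norm_of_nonneg hτ.le, Complex.norm_natCast]
  exact div_le_self (by positivity) hfact

lemma IsCompact.exists_pos_bound_of_continuousOn {α E : Type*} [TopologicalSpace α]
    [SeminormedAddCommGroup E] {s : Set α} (hs : IsCompact s) {f : α → E}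
    (hf : ContinuousOn f s) : ∃ C > 0, ∀ x ∈ s, ‖f x‖ ≤ C := by
  obtain ⟨C, hC⟩ := hs.exists_bound_of_continuousOn hf
  exact ⟨max C 1, by positivity, fun x hx => (hC x hx).trans (le_max_left C 1)⟩

lemma exists_pos_bound_mul_norm_of_differentiableOn {E : Type*} [NormedAddCommGroup E]
    [NormedSpace ℂ E] [CompleteSpace E] {f : ℂ → E} {r R : ℝ} (hr : 0 ≤ r) (hrR : r < R)
    (hf : DifferentiableOn ℂ f (ball 0 R)) (hf0 : f 0 = 0) :
    ∃ C > 0, ∀ w ∈ closedBall (0 : ℂ) r, ‖f w‖ ≤ C * ‖w‖ := by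
  have hslope : ContinuousOn (dslope f 0) (ball 0 R) :=
    ((differentiableOn_dslope (ball_mem_nhds 0 (hr.trans_lt hrR))).2 hf).continuousOn
  obtain ⟨C, hC, hbound⟩ := (isCompact_closedBall (0 : ℂ) r).exists_pos_bound_of_continuousOn
    (hslope.mono (closedBall_subset_ball hrR))
  refine ⟨C, hC, fun w hw => ?_⟩
  have hfw : f w = w • dslope f 0 w := by simpa [hf0] using (sub_smul_dslope f 0 w).symm
  rw [hfw, norm_smul, mul_comm]
  exact mul_le_mul_of_nonneg_right (hbound w hw) (norm_nonneg w)

theorem stmt5_general (l : ℕ) (θ : ℝ) (hsin : 1 / 2 < Real.sin θ) :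
    ∃ c > (0 : ℝ), ∀ τ : ℝ, 0 < τ → ∀ z : ℂ, z ≠ 0 → |z.arg| ≤ θ →
      ‖z‖ * τ ≤ π / Real.sin θ →
        ((l = 0 ∨ Odd l) →
          ‖gammaPoly l (Complex.exp (-z * τ)) / (l.factorial : ℂ) * (τ : ℂ) ^ (l + 1)
              - z ^ (-(l + 1 : ℤ))‖ ≤ c * τ ^ (l + 1)) ∧
        (2 ≤ l → Even l →
          ‖gammaPoly l (Complex.exp (-z * τ)) / (l.factorial : ℂ) * (τ : ℂ) ^ (l + 1)
              - z ^ (-(l + 1 : ℤ))‖ ≤ c * τ ^ (l + 2) * ‖z‖) := by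
  set r := π / Real.sin θ
  have hr : 0 ≤ r := div_nonneg pi_pos.le (by linarith)
  have hr2π : r < 2 * π := by rw [div_lt_iff₀ (by linarith)]; nlinarith [pi_pos]
  have hφ := differentiableOn_iteratedDeriv_expRegular l
  have hmem {τ : ℝ} (hτ : 0 < τ) {z : ℂ} (hzτ : ‖z‖ * τ ≤ r) : z * τ ∈ closedBall (0 : ℂ) r := by
    rwa [mem_closedBall_zero_iff, norm_mul, norm_real, Real.norm_of_nonneg hτ.le]
  by_cases hl : l = 0 ∨ Odd l
  · obtain ⟨c, hc, hbound⟩ :=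
      (isCompact_closedBall (0 : ℂ) r).exists_pos_bound_of_continuousOn
        (hφ.continuousOn.mono (closedBall_subset_ball hr2π))
    refine ⟨c, hc, fun τ hτ z hz _ hzr => ⟨fun _ => ?_, fun hl2 he => ?_⟩⟩
    · calc _ ≤ ‖iteratedDeriv l expRegular (z * τ)‖ * τ ^ (l + 1) :=
            norm_gammaPoly_sub_zpow_le l hτ hz (hzr.trans_lt hr2π)
        _ ≤ c * τ ^ (l + 1) := by gcongr; exact hbound _ (hmem hτ hzr)
    · rcases hl with rfl | ho
      · omega
      · exact absurd he (Nat.not_even_iff_odd.2 ho)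
  · have hle : Even l := Nat.not_odd_iff_even.1 fun ho => hl (Or.inr ho)
    obtain ⟨c, hc, hbound⟩ := exists_pos_bound_mul_norm_of_differentiableOn hr hr2π hφ
      (iteratedDeriv_expRegular_zero_of_even (fun h0 => hl (Or.inl h0)) hle)
    refine ⟨c, hc, fun τ hτ z hz _ hzr => ⟨fun h => absurd h hl, fun _ _ => ?_⟩⟩
    calc _ ≤ ‖iteratedDeriv l expRegular (z * τ)‖ * τ ^ (l + 1) :=
          norm_gammaPoly_sub_zpow_le l hτ hz (hzr.trans_lt hr2π)
      _ ≤ c * ‖z * τ‖ * τ ^ (l + 1) := by gcongr; exact hbound _ (hmem hτ hzr)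
      _ = c * τ ^ (l + 2) * ‖z‖ := by
        rw [norm_mul, norm_real, Real.norm_of_nonneg hτ.le]; ring

theorem stmt5 (k l : ℕ) (hk1 : 1 ≤ k) (hk6 : k ≤ 6) (hl : l ≤ 2 * k)
    (θ : ℝ) (hθ : θ ∈ Set.Ioo (π / 2) π) (hsin : 1 / 2 < Real.sin θ) :
    ∃ c > (0 : ℝ), ∀ τ : ℝ, 0 < τ → ∀ z : ℂ, z ≠ 0 → |z.arg| ≤ θ →
      ‖z‖ * τ ≤ π / Real.sin θ →
        ((l = 0 ∨ Odd l) →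
          ‖gammaPoly l (Complex.exp (-z * τ)) / (l.factorial : ℂ) * (τ : ℂ) ^ (l + 1)
              - z ^ (-(l + 1 : ℤ))‖ ≤ c * τ ^ (l + 1)) ∧
        (2 ≤ l → Even l →
          ‖gammaPoly l (Complex.exp (-z * τ)) / (l.factorial : ℂ) * (τ : ℂ) ^ (l + 1)
              - z ^ (-(l + 1 : ℤ))‖ ≤ c * τ ^ (l + 2) * ‖z‖) :=
  stmt5_general l θ hsin
end

section
/- Let H be a complex Banach space, A : H → H a linear map (not assumed continuous), α ∈ (0,1), θ ∈ (π/2, π) with sin θ > 1/2, c₀ > 0, and suppose R : Σ_θ → B(H) assigns to each z ∈ Σ_θ a bounded linear operator R(z) on H such that R(z) is a two-sided inverse of z^α·I − A and ‖R(z)‖ ≤ c₀·|z|^{−α}. Let k, m be integers with 1 ≤ m ≤ k ≤ 6. Then there exists c > 0, depending only on k, m, α, θ, c₀, such that for every τ > 0 and every z ∈ Σ_θ with |z|·τ ≤ π/sin θ and δ_{τ,k}(e^{−zτ}) ∈ Σ_θ: ‖δ_{τ,k}(e^{−zτ})^m·R(δ_{τ,k}(e^{−zτ})) − z^m·R(z)‖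 ≤ c·τ^k·|z|^{k+m−α}. -/
open Complex Real

/-- The BDFk generating polynomial `δ_{τ,k}(ξ) = (1/τ)·Σ_{j=1}^{k} (1−ξ)^j / j`. -/
noncomputable def bdfDelta (τ : ℝ) (k : ℕ) (ξ : ℂ) : ℂ :=
  (1 / (τ : ℂ)) * ∑ j ∈ Finset.Icc 1 k, (1 - ξ) ^ j / (j : ℂ)

/-- The open sector `Σ_θ = {z ∈ ℂ \ {0} : |arg z| < θ}`. -/
def sector (θ : ℝ) : Set ℂ := {z : ℂ | z ≠ 0 ∧ |z.arg| < θ}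

/-!
For `‖z‖τ` small, `τ δ_{τ,k}(e^{-zτ})` is the degree-`k` Taylor polynomial of
`-log (1 - u) = zτ` evaluated at `u = 1 - e^{-zτ}`, so `δ := δ_{τ,k}(e^{-zτ})` differs from `z` by
`O(τ^k ‖z‖^(k+1))`. On the ball `‖w - z‖ < ‖z‖/2`, which `sin θ > 1/2` keeps off the branch cut
of `w ^ α`, the map `w ↦ w^m R(w)` is Lipschitz with constant `O(‖z‖^(m-1-α))`: write
`R(δ) - R(z) = (z^α - δ^α) R(δ) R(z)` and apply the mean value theorem to `w^m` and `w^α`.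
For `‖z‖τ` bounded below, `‖δ‖ = O(‖z‖)`, so both terms are `O(‖z‖^(m-α))`, while `τ^k ‖z‖^k`
is bounded below.
-/

lemma rpow_neg_le_two_mul_rpow_neg {r x β : ℝ} (hr : 0 < r) (hx : r / 2 ≤ x)
    (hβ : β ∈ Set.Icc 0 1) : x ^ (-β) ≤ 2 * r ^ (-β) := by
  calc x ^ (-β) ≤ (r / 2) ^ (-β) :=
        Real.rpow_le_rpow_of_nonpos (by positivity) hx (by linarith [hβ.1])
    _ = 2 ^ β * r ^ (-β) := by
      rw [Real.div_rpow hr.le zero_le_two, Real.rpow_neg zero_le_two, div_inv_eq_mul, mul_comm]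
    _ ≤ 2 * r ^ (-β) := by
      gcongr
      simpa using Real.rpow_le_rpow_of_exponent_le one_le_two hβ.2

lemma norm_mul_cos_lt_re_of_mem_sector {θ : ℝ} (hθ : θ ≤ π) {z : ℂ} (hz : z ∈ sector θ) :
    ‖z‖ * Real.cos θ < z.re := by
  rw [← norm_mul_cos_arg, ← Real.cos_abs z.arg]
  exact mul_lt_mul_of_pos_left (Real.cos_lt_cos_of_nonneg_of_le_pi (abs_nonneg _) hθ hz.2)
    (norm_pos_iff.mpr hz.1)

lemma half_norm_lt_norm_sub_of_mem_sector {θ : ℝ} (hθ : θ ≤ π) (hsin : 1 / 2 < Real.sin θ)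
    {z w : ℂ} (hz : z ∈ sector θ) (hw : w ∉ slitPlane) : ‖z‖ / 2 < ‖w - z‖ := by
  rw [mem_slitPlane_iff, not_or, not_lt, not_not] at hw
  have hcos := norm_mul_cos_lt_re_of_mem_sector hθ hz
  have hz0 : 0 < ‖z‖ := norm_pos_iff.mpr hz.1
  have hnorm : ‖z‖ ^ 2 = z.re ^ 2 + z.im ^ 2 := by rw [Complex.sq_norm, normSq_apply]; ring
  have hnorm' : ‖w - z‖ ^ 2 = (w.re - z.re) ^ 2 + z.im ^ 2 := by
    rw [Complex.sq_norm, normSq_apply, sub_re, sub_im, hw.2]; ring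
  refine lt_of_pow_lt_pow_left₀ 2 (norm_nonneg _) ?_
  rw [div_pow, hnorm']
  rcases le_or_gt 0 z.re with hre | hre
  · nlinarith [mul_nonneg (neg_nonneg.mpr hw.1) hre]
  · have hsq : z.re ^ 2 < ‖z‖ ^ 2 * Real.cos θ ^ 2 := by nlinarith
    have hsin2 : 1 / 4 < Real.sin θ ^ 2 := by nlinarith
    nlinarith [Real.sin_sq_add_cos_sq θ, sq_nonneg (w.re - z.re)]

lemma ball_subset_slitPlane_of_mem_sector {θ : ℝ} (hθ : θ ≤ π) (hsin : 1 / 2 < Real.sin θ)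
    {z : ℂ} (hz : z ∈ sector θ) : Metric.ball z (‖z‖ / 2) ⊆ slitPlane := fun w hw => by
  by_contra h
  exact (half_norm_lt_norm_sub_of_mem_sector hθ hsin hz h).not_ge (dist_eq_norm w z ▸ hw.le)

lemma norm_pow_sub_pow_le {𝕜 : Type*} [RCLike 𝕜] {a b : 𝕜} {M : ℝ} (ha : ‖a‖ ≤ M)
    (hb : ‖b‖ ≤ M) (m : ℕ) : ‖a ^ m - b ^ m‖ ≤ m * M ^ (m - 1) * ‖a - b‖ := by
  refine (convex_closedBall (0 : 𝕜) M).norm_image_sub_le_of_norm_hasDerivWithin_le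
    (fun w _ => (hasDerivAt_pow m w).hasDerivWithinAt) (fun w hw => ?_)
    (mem_closedBall_zero_iff.mpr hb) (mem_closedBall_zero_iff.mpr ha)
  rw [norm_mul, norm_pow, RCLike.norm_natCast]
  gcongr
  exact mem_closedBall_zero_iff.mp hw

lemma norm_cpow_sub_cpow_le {α : ℝ} (hα : α ∈ Set.Icc 0 1) {z δ : ℂ}
    (hball : Metric.ball z (‖z‖ / 2) ⊆ slitPlane) (hδ : ‖δ - z‖ < ‖z‖ / 2) :
    ‖δ ^ (α : ℂ) - z ^ (α : ℂ)‖ ≤ 2 * ‖z‖ ^ (α - 1) * ‖δ - z‖ := by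
  have hz : 0 < ‖z‖ := by linarith [norm_nonneg (δ - z)]
  refine (convex_ball z (‖z‖ / 2)).norm_image_sub_le_of_norm_hasDerivWithin_le
    (fun w hw => (hasStrictDerivAt_cpow_const (hball hw)).hasDerivAt.hasDerivWithinAt)
    (fun w hw => ?_) (Metric.mem_ball_self (by positivity)) (by rwa [mem_ball_iff_norm])
  have hw : ‖z‖ / 2 ≤ ‖w‖ := by
    have := norm_sub_norm_le z w
    rw [mem_ball_iff_norm, norm_sub_rev] at hw
    linarith
  have hexp : (α : ℂ) - 1 = ((α - 1 : ℝ) : ℂ) := by push_cast; ring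
  rw [norm_mul, hexp, norm_cpow_real, norm_real, Real.norm_of_nonneg hα.1]
  calc α * ‖w‖ ^ (α - 1) ≤ 1 * ‖w‖ ^ (-(1 - α)) := by
        rw [neg_sub]; gcongr; exact hα.2
    _ ≤ 2 * ‖z‖ ^ (α - 1) := by
        rw [one_mul, ← neg_sub 1 α]
        exact rpow_neg_le_two_mul_rpow_neg hz hw ⟨by linarith [hα.2], by linarith [hα.1]⟩

lemma logTaylor_succ_neg (k : ℕ) (u : ℂ) :
    logTaylor (k + 1) (-u) = -∑ j ∈ Finset.Icc 1 k, u ^ j / (j : ℂ) := by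
  rw [logTaylor, Finset.range_eq_Ico, Finset.sum_eq_sum_Ico_succ_bot (Nat.succ_pos k),
    zero_add, Nat.succ_eq_add_one, Finset.Ico_add_one_right_eq_Icc, ← Finset.sum_neg_distrib]
  simp only [CharP.cast_eq_zero, div_zero, zero_add]
  refine Finset.sum_congr rfl fun j _ => ?_
  rw [neg_pow u, ← mul_assoc, ← pow_add, (by ring : j + 1 + j = 2 * j + 1), pow_succ, pow_mul]
  simp [neg_div]

lemma norm_sum_one_sub_exp_neg_pow_div_sub_le (k : ℕ) {w : ℂ} (hw : ‖w‖ ≤ 1 / 4) :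
    ‖∑ j ∈ Finset.Icc 1 k, (1 - exp (-w)) ^ j / (j : ℂ) - w‖ ≤ 2 ^ (k + 2) * ‖w‖ ^ (k + 1) := by
  set u := 1 - exp (-w)
  have hu : ‖u‖ ≤ 2 * ‖w‖ := by
    simpa [u, norm_sub_rev] using norm_exp_sub_one_le (x := -w) (by rw [norm_neg]; linarith)
  have hlog : log (1 - u)⁻¹ = w := by
    have hpi : |w.im| < π := (abs_im_le_norm w).trans_lt (by linarith [Real.pi_gt_three])
    rw [sub_sub_cancel, ← Complex.exp_neg, neg_neg,
      log_exp (by linarith [abs_lt.mp hpi]) (abs_lt.mp hpi).2.le]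
  have hremainder := norm_log_one_sub_inv_add_logTaylor_neg_le k (z := u) (by linarith)
  rw [hlog, logTaylor_succ_neg, ← sub_eq_add_neg, norm_sub_rev] at hremainder
  have hu1 : 0 < 1 - ‖u‖ := by linarith
  calc _ ≤ ‖u‖ ^ (k + 1) * (1 - ‖u‖)⁻¹ / (k + 1) := hremainder
    _ ≤ ‖u‖ ^ (k + 1) * (1 - ‖u‖)⁻¹ := div_le_self (by positivity) (by simp)
    _ ≤ ‖u‖ ^ (k + 1) * 2 := by
      gcongr
      rw [inv_le_comm₀ hu1 two_pos]; linarith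
    _ ≤ (2 * ‖w‖) ^ (k + 1) * 2 := by gcongr
    _ = 2 ^ (k + 2) * ‖w‖ ^ (k + 1) := by ring

lemma norm_bdfDelta_exp_sub_le (k : ℕ) {τ : ℝ} (hτ : 0 < τ) {z : ℂ} (hzτ : ‖z‖ * τ ≤ 1 / 4) :
    ‖bdfDelta τ k (exp (-z * τ)) - z‖ ≤ 2 ^ (k + 2) * τ ^ k * ‖z‖ ^ (k + 1) := by
  have hτ' : (τ : ℂ) ≠ 0 := ofReal_ne_zero.mpr hτ.ne'
  have hnorm : ‖z * τ‖ = ‖z‖ * τ := by rw [norm_mul, norm_real, Real.norm_of_nonneg hτ.le]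
  have h : bdfDelta τ k (exp (-z * τ)) - z = (1 / (τ : ℂ)) *
      (∑ j ∈ Finset.Icc 1 k, (1 - exp (-(z * τ))) ^ j / (j : ℂ) - z * τ) := by
    rw [bdfDelta, neg_mul]; field_simp
  rw [h, norm_mul, norm_div, norm_one, norm_real, Real.norm_of_nonneg hτ.le]
  calc _ ≤ 1 / τ * (2 ^ (k + 2) * (‖z‖ * τ) ^ (k + 1)) := by
        gcongr
        rw [← hnorm]
        exact norm_sum_one_sub_exp_neg_pow_div_sub_le k (hnorm ▸ hzτ)
    _ = 2 ^ (k + 2) * τ ^ k * ‖z‖ ^ (k + 1) := by field_simp; ring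

lemma norm_bdfDelta_le (k : ℕ) {τ : ℝ} (hτ : 0 < τ) (ξ : ℂ) :
    ‖bdfDelta τ k ξ‖ ≤ k * (1 + ‖ξ‖) ^ k / τ := by
  rw [bdfDelta, norm_mul, norm_div, norm_one, norm_real, Real.norm_of_nonneg hτ.le,
    one_div_mul_eq_div]
  gcongr
  calc _ ≤ ∑ j ∈ Finset.Icc 1 k, (1 + ‖ξ‖) ^ k := by
        refine norm_sum_le_of_le _ fun j hj => ?_
        obtain ⟨hj1, hjk⟩ := Finset.mem_Icc.mp hj
        rw [norm_div, norm_pow, Complex.norm_natCast]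
        calc ‖1 - ξ‖ ^ j / j ≤ ‖1 - ξ‖ ^ j := div_le_self (by positivity) (by exact_mod_cast hj1)
          _ ≤ (1 + ‖ξ‖) ^ j := by gcongr; simpa using norm_sub_le (1 : ℂ) ξ
          _ ≤ (1 + ‖ξ‖) ^ k := pow_le_pow_right₀ (by linarith [norm_nonneg ξ]) hjk
    _ = k * (1 + ‖ξ‖) ^ k := by simp

section ResolventIdentity

variable {𝕜 E : Type*} [NontriviallyNormedField 𝕜] [NormedAddCommGroup E] [NormedSpace 𝕜 E]
  {A : E →ₗ[𝕜] E} {a b : 𝕜} {Ra Rb : E →L[𝕜] E}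

lemma resolvent_sub_resolvent_eq (ha : ∀ x, Ra (a • x - A x) = x)
    (hb : ∀ x, b • Rb x - A (Rb x) = x) : Ra - Rb = (b - a) • Ra.comp Rb := by
  ext x
  have hx : b • Rb x - A (Rb x) = (a • Rb x - A (Rb x)) + (b - a) • Rb x := by
    rw [sub_smul]; abel
  have hRa := congrArg Ra hx
  rw [hb, map_add, ha, map_smul] at hRa
  rw [sub_apply, hRa, add_sub_cancel_left]
  rfl

lemma norm_resolvent_sub_resolvent_le (ha : ∀ x, Ra (a • x - A x) = x)
    (hb : ∀ x, b • Rb x - A (Rb x) = x) : ‖Ra - Rb‖ ≤ ‖a - b‖ * (‖Ra‖ * ‖Rb‖) := by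
  rw [resolvent_sub_resolvent_eq ha hb, norm_sub_rev]
  exact (norm_smul_le _ _).trans (by gcongr; exact Ra.opNorm_comp_le Rb)

end ResolventIdentity

section FractionalResolvent

variable {H : Type*} [NormedAddCommGroup H] [NormedSpace ℂ H] {A : H →ₗ[ℂ] H}
  {α θ c₀ : ℝ} {R : ℂ → H →L[ℂ] H}

lemma norm_pow_smul_resolvent_le (hRnorm : ∀ z ∈ sector θ, ‖R z‖ ≤ c₀ * ‖z‖ ^ (-α))
    {z : ℂ} (hz : z ∈ sector θ) (m : ℕ) : ‖z ^ m • R z‖ ≤ c₀ * ‖z‖ ^ ((m : ℝ) - α) := by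
  rw [norm_smul, norm_pow, sub_eq_add_neg, Real.rpow_add (norm_pos_iff.mpr hz.1),
    Real.rpow_natCast]
  calc _ ≤ ‖z‖ ^ m * (c₀ * ‖z‖ ^ (-α)) := by gcongr; exact hRnorm z hz
    _ = _ := by ring

lemma norm_resolvent_le_of_norm_sub_lt (hα : α ∈ Set.Icc 0 1) (hc₀ : 0 ≤ c₀)
    (hRnorm : ∀ z ∈ sector θ, ‖R z‖ ≤ c₀ * ‖z‖ ^ (-α)) {z δ : ℂ} (hz : z ∈ sector θ)
    (hδ : δ ∈ sector θ) (hδz : ‖δ - z‖ < ‖z‖ / 2) : ‖R δ‖ ≤ 2 * c₀ * ‖z‖ ^ (-α) := by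
  have hδlow : ‖z‖ / 2 ≤ ‖δ‖ := by linarith [norm_sub_norm_le z δ, norm_sub_rev z δ]
  calc ‖R δ‖ ≤ c₀ * ‖δ‖ ^ (-α) := hRnorm δ hδ
    _ ≤ c₀ * (2 * ‖z‖ ^ (-α)) := by
      gcongr; exact rpow_neg_le_two_mul_rpow_neg (norm_pos_iff.mpr hz.1) hδlow hα
    _ = _ := by ring

lemma norm_resolvent_sub_le (hα : α ∈ Set.Icc 0 1) (hθ : θ ≤ π)
    (hsin : 1 / 2 < Real.sin θ) (hc₀ : 0 ≤ c₀)
    (hR1 : ∀ z ∈ sector θ, ∀ x : H, R z (z ^ (α : ℂ) • x - A x) = x)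
    (hR2 : ∀ z ∈ sector θ, ∀ x : H, z ^ (α : ℂ) • R z x - A (R z x) = x)
    (hRnorm : ∀ z ∈ sector θ, ‖R z‖ ≤ c₀ * ‖z‖ ^ (-α))
    {z δ : ℂ} (hz : z ∈ sector θ) (hδ : δ ∈ sector θ) (hδz : ‖δ - z‖ < ‖z‖ / 2) :
    ‖R δ - R z‖ ≤ 4 * c₀ ^ 2 * ‖z‖ ^ (-1 - α) * ‖δ - z‖ := by
  have hexp : ‖z‖ ^ (α - 1) * (‖z‖ ^ (-α) * ‖z‖ ^ (-α)) = ‖z‖ ^ (-1 - α) := by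
    rw [← Real.rpow_add (norm_pos_iff.mpr hz.1), ← Real.rpow_add (norm_pos_iff.mpr hz.1)]
    ring_nf
  calc ‖R δ - R z‖ ≤ ‖δ ^ (α : ℂ) - z ^ (α : ℂ)‖ * (‖R δ‖ * ‖R z‖) :=
        norm_resolvent_sub_resolvent_le (hR1 δ hδ) (hR2 z hz)
    _ ≤ (2 * ‖z‖ ^ (α - 1) * ‖δ - z‖) * ((2 * c₀ * ‖z‖ ^ (-α)) * (c₀ * ‖z‖ ^ (-α))) := by
        gcongr
        · exact norm_cpow_sub_cpow_le hα (ball_subset_slitPlane_of_mem_sector hθ hsin hz) hδz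
        · exact norm_resolvent_le_of_norm_sub_lt hα hc₀ hRnorm hz hδ hδz
        · exact hRnorm z hz
    _ = _ := by rw [← hexp]; ring

lemma norm_pow_smul_resolvent_sub_le (hα : α ∈ Set.Icc 0 1) (hθ : θ ≤ π)
    (hsin : 1 / 2 < Real.sin θ) (hc₀ : 0 ≤ c₀)
    (hR1 : ∀ z ∈ sector θ, ∀ x : H, R z (z ^ (α : ℂ) • x - A x) = x)
    (hR2 : ∀ z ∈ sector θ, ∀ x : H, z ^ (α : ℂ) • R z x - A (R z x) = x)
    (hRnorm : ∀ z ∈ sector θ, ‖R z‖ ≤ c₀ * ‖z‖ ^ (-α))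
    {z δ : ℂ} (hz : z ∈ sector θ) (hδ : δ ∈ sector θ) (hδz : ‖δ - z‖ < ‖z‖ / 2)
    {m : ℕ} (hm : 1 ≤ m) :
    ‖δ ^ m • R δ - z ^ m • R z‖ ≤
      (m * 2 ^ m * c₀ + 4 * c₀ ^ 2) * ‖z‖ ^ ((m : ℝ) - 1 - α) * ‖δ - z‖ := by
  set r := ‖z‖
  have hr : 0 < r := norm_pos_iff.mpr hz.1
  have hδup : ‖δ‖ ≤ 2 * r := by linarith [norm_le_norm_sub_add δ z]
  have hsplit : δ ^ m • R δ - z ^ m • R z = (δ ^ m - z ^ m) • R δ + z ^ m • (R δ - R z) := by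
    rw [sub_smul, smul_sub]; abel
  obtain ⟨n, rfl⟩ := Nat.exists_eq_add_of_le' hm
  have hexp₁ : r ^ n * r ^ (-α) = r ^ ((↑(n + 1) : ℝ) - 1 - α) := by
    rw [← Real.rpow_natCast, ← Real.rpow_add hr]; push_cast; ring_nf
  have hexp₂ : r ^ (n + 1) * r ^ (-1 - α) = r ^ ((↑(n + 1) : ℝ) - 1 - α) := by
    rw [← Real.rpow_natCast, ← Real.rpow_add hr]; push_cast; ring_nf
  rw [hsplit]
  refine (norm_add_le _ _).trans ?_
  rw [norm_smul, norm_smul, norm_pow]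
  calc ‖δ ^ (n + 1) - z ^ (n + 1)‖ * ‖R δ‖ + r ^ (n + 1) * ‖R δ - R z‖
      ≤ ((n + 1 : ℕ) * (2 * r) ^ n * ‖δ - z‖) * (2 * c₀ * r ^ (-α)) +
        r ^ (n + 1) * (4 * c₀ ^ 2 * r ^ (-1 - α) * ‖δ - z‖) := by
        gcongr
        · simpa using norm_pow_sub_pow_le hδup (by linarith) (n + 1)
        · exact norm_resolvent_le_of_norm_sub_lt hα hc₀ hRnorm hz hδ hδz
        · exact norm_resolvent_sub_le hα hθ hsin hc₀ hR1 hR2 hRnorm hz hδ hδz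
    _ = ((n + 1 : ℕ) * 2 ^ (n + 1) * c₀ * (r ^ n * r ^ (-α)) +
        4 * c₀ ^ 2 * (r ^ (n + 1) * r ^ (-1 - α))) * ‖δ - z‖ := by ring
    _ = _ := by rw [hexp₁, hexp₂]; ring

lemma norm_bdfDelta_pow_smul_resolvent_sub_le_of_small (hα : α ∈ Set.Icc 0 1) (hθ : θ ≤ π)
    (hsin : 1 / 2 < Real.sin θ) (hc₀ : 0 ≤ c₀)
    (hR1 : ∀ z ∈ sector θ, ∀ x : H, R z (z ^ (α : ℂ) • x - A x) = x)
    (hR2 : ∀ z ∈ sector θ, ∀ x : H, z ^ (α : ℂ) • R z x - A (R z x) = x)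
    (hRnorm : ∀ z ∈ sector θ, ‖R z‖ ≤ c₀ * ‖z‖ ^ (-α))
    {k m : ℕ} (hk : 1 ≤ k) (hm : 1 ≤ m) {τ : ℝ} (hτ : 0 < τ) {z : ℂ} (hz : z ∈ sector θ)
    (hzτ : ‖z‖ * τ ≤ 1 / 32) (hδ : bdfDelta τ k (exp (-z * τ)) ∈ sector θ) :
    ‖bdfDelta τ k (exp (-z * τ)) ^ m • R (bdfDelta τ k (exp (-z * τ))) - z ^ m • R z‖ ≤
      (m * 2 ^ m * c₀ + 4 * c₀ ^ 2) * 2 ^ (k + 2) * τ ^ k * ‖z‖ ^ ((k : ℝ) + m - α) := by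
  set r := ‖z‖
  have hr : 0 < r := norm_pos_iff.mpr hz.1
  have hdist := norm_bdfDelta_exp_sub_le k hτ (hzτ.trans (by norm_num))
  have hsmall : 2 ^ (k + 2) * τ ^ k * r ^ (k + 1) ≤ r / 4 := by
    have h2rτ : (2 * r * τ) ^ k ≤ 2 * r * τ :=
      pow_le_of_le_one (by positivity) (by linarith) (by omega)
    calc 2 ^ (k + 2) * τ ^ k * r ^ (k + 1) = 4 * (2 * r * τ) ^ k * r := by ring
      _ ≤ 4 * (2 * r * τ) * r := by gcongr
      _ ≤ r / 4 := by nlinarith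
  have hexp : r ^ ((m : ℝ) - 1 - α) * r ^ (k + 1) = r ^ ((k : ℝ) + m - α) := by
    rw [← Real.rpow_natCast, ← Real.rpow_add hr]; push_cast; ring_nf
  calc _ ≤ (m * 2 ^ m * c₀ + 4 * c₀ ^ 2) * r ^ ((m : ℝ) - 1 - α) *
        ‖bdfDelta τ k (exp (-z * τ)) - z‖ :=
        norm_pow_smul_resolvent_sub_le hα hθ hsin hc₀ hR1 hR2 hRnorm hz hδ
          (by linarith) hm
    _ ≤ (m * 2 ^ m * c₀ + 4 * c₀ ^ 2) * r ^ ((m : ℝ) - 1 - α) *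
        (2 ^ (k + 2) * τ ^ k * r ^ (k + 1)) := by gcongr
    _ = _ := by rw [← hexp]; ring

lemma norm_bdfDelta_pow_smul_resolvent_sub_le_of_large (hα : α ≤ 1) (hc₀ : 0 ≤ c₀)
    (hRnorm : ∀ z ∈ sector θ, ‖R z‖ ≤ c₀ * ‖z‖ ^ (-α))
    {k m : ℕ} (hm : 1 ≤ m) {τ : ℝ} (hτ : 0 < τ) {z : ℂ} (hz : z ∈ sector θ) {L : ℝ}
    (hzτ : 1 / 32 < ‖z‖ * τ) (hL : ‖z‖ * τ ≤ L) (hδ : bdfDelta τ k (exp (-z * τ)) ∈ sector θ) :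
    ‖bdfDelta τ k (exp (-z * τ)) ^ m • R (bdfDelta τ k (exp (-z * τ))) - z ^ m • R z‖ ≤
      c₀ * ((32 * k * (1 + Real.exp L) ^ k) ^ ((m : ℝ) - α) + 1) * 32 ^ k * τ ^ k *
        ‖z‖ ^ ((k : ℝ) + m - α) := by
  set r := ‖z‖
  set M := 32 * k * (1 + Real.exp L) ^ k
  have hr : 0 < r := norm_pos_iff.mpr hz.1
  have hmα : 0 ≤ (m : ℝ) - α := by
    have : (1 : ℝ) ≤ m := by exact_mod_cast hm
    linarith
  have hξ : ‖exp (-z * τ)‖ ≤ Real.exp L := by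
    rw [norm_exp]
    gcongr
    calc (-z * τ).re ≤ ‖-z * τ‖ := re_le_norm _
      _ = r * τ := by rw [norm_mul, norm_neg, norm_real, Real.norm_of_nonneg hτ.le]
      _ ≤ L := hL
  have hδr : ‖bdfDelta τ k (exp (-z * τ))‖ ≤ M * r := by
    calc _ ≤ k * (1 + ‖exp (-z * τ)‖) ^ k / τ := norm_bdfDelta_le k hτ _
      _ ≤ k * (1 + Real.exp L) ^ k / τ := by gcongr
      _ = k * (1 + Real.exp L) ^ k * τ⁻¹ := div_eq_mul_inv _ _
      _ ≤ k * (1 + Real.exp L) ^ k * (32 * r) := by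
        gcongr; rw [inv_le_iff_one_le_mul₀ hτ]; linarith
      _ = M * r := by ring
  have hδ_term := (norm_pow_smul_resolvent_le hRnorm hδ m).trans
    (mul_le_mul_of_nonneg_left (Real.rpow_le_rpow (norm_nonneg _) hδr hmα) hc₀)
  rw [Real.mul_rpow (by positivity) hr.le] at hδ_term
  have hz_term := norm_pow_smul_resolvent_le hRnorm hz m
  have hone : 1 ≤ 32 ^ k * τ ^ k * r ^ k := by
    rw [← mul_pow, ← mul_pow]; exact one_le_pow₀ (by linarith)
  have hexp : r ^ k * r ^ ((m : ℝ) - α) = r ^ ((k : ℝ) + m - α) := by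
    rw [← Real.rpow_natCast, ← Real.rpow_add hr]; ring_nf
  calc _ ≤ c₀ * (M ^ ((m : ℝ) - α) * r ^ ((m : ℝ) - α)) + c₀ * r ^ ((m : ℝ) - α) :=
        (norm_sub_le _ _).trans (add_le_add hδ_term hz_term)
    _ = c₀ * (M ^ ((m : ℝ) - α) + 1) * r ^ ((m : ℝ) - α) := by ring
    _ ≤ c₀ * (M ^ ((m : ℝ) - α) + 1) * r ^ ((m : ℝ) - α) * (32 ^ k * τ ^ k * r ^ k) :=
        le_mul_of_one_le_right (by positivity) hone
    _ = _ := by rw [← hexp]; ring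

end FractionalResolvent

theorem stmt12_general {H : Type*} [NormedAddCommGroup H] [NormedSpace ℂ H]
    (A : H →ₗ[ℂ] H) (α : ℝ) (hα : α ∈ Set.Ioo (0 : ℝ) 1)
    (θ : ℝ) (hθ : θ ∈ Set.Ioo (π / 2) π) (hsin : 1 / 2 < Real.sin θ)
    (c₀ : ℝ) (hc₀ : 0 < c₀) (R : ℂ → H →L[ℂ] H)
    (hR1 : ∀ z ∈ sector θ, ∀ x : H, R z (z ^ (α : ℂ) • x - A x) = x)
    (hR2 : ∀ z ∈ sector θ, ∀ x : H, z ^ (α : ℂ) • R z x - A (R z x) = x)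
    (hRnorm : ∀ z ∈ sector θ, ‖R z‖ ≤ c₀ * ‖z‖ ^ (-α))
    (k m : ℕ) (hm1 : 1 ≤ m) (hmk : m ≤ k) :
    ∃ c > (0 : ℝ), ∀ τ : ℝ, 0 < τ → ∀ z ∈ sector θ,
      ‖z‖ * τ ≤ π / Real.sin θ →
      bdfDelta τ k (Complex.exp (-z * τ)) ∈ sector θ →
        ‖(bdfDelta τ k (Complex.exp (-z * τ)) ^ m) • R (bdfDelta τ k (Complex.exp (-z * τ)))
            - (z ^ m) • R z‖ ≤
          c * τ ^ k * ‖z‖ ^ ((k : ℝ) + m - α) := by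
  set c_small := (m * 2 ^ m * c₀ + 4 * c₀ ^ 2) * 2 ^ (k + 2)
  set c_large :=
    c₀ * ((32 * k * (1 + Real.exp (π / Real.sin θ)) ^ k) ^ ((m : ℝ) - α) + 1) * 32 ^ k
  refine ⟨c_small + c_large, by positivity, fun τ hτ z hz hzL hδ => ?_⟩
  rcases le_or_gt (‖z‖ * τ) (1 / 32) with hzτ | hzτ
  · calc _ ≤ c_small * τ ^ k * ‖z‖ ^ ((k : ℝ) + m - α) :=
          norm_bdfDelta_pow_smul_resolvent_sub_le_of_small ⟨hα.1.le, hα.2.le⟩ hθ.2.le hsin hc₀.le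
            hR1 hR2 hRnorm (hm1.trans hmk) hm1 hτ hz hzτ hδ
      _ ≤ _ := by gcongr; exact le_add_of_nonneg_right (by positivity : (0 : ℝ) ≤ c_large)
  · calc _ ≤ c_large * τ ^ k * ‖z‖ ^ ((k : ℝ) + m - α) :=
          norm_bdfDelta_pow_smul_resolvent_sub_le_of_large hα.2.le hc₀.le hRnorm hm1 hτ hz hzτ hzL hδ
      _ ≤ _ := by gcongr; exact le_add_of_nonneg_left (by positivity : (0 : ℝ) ≤ c_small)

theorem stmt12 {H : Type*} [NormedAddCommGroup H] [NormedSpace ℂ H] [CompleteSpace H]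
    (A : H →ₗ[ℂ] H) (α : ℝ) (hα : α ∈ Set.Ioo (0 : ℝ) 1)
    (θ : ℝ) (hθ : θ ∈ Set.Ioo (π / 2) π) (hsin : 1 / 2 < Real.sin θ)
    (c₀ : ℝ) (hc₀ : 0 < c₀) (R : ℂ → H →L[ℂ] H)
    (hR1 : ∀ z ∈ sector θ, ∀ x : H, R z (z ^ (α : ℂ) • x - A x) = x)
    (hR2 : ∀ z ∈ sector θ, ∀ x : H, z ^ (α : ℂ) • R z x - A (R z x) = x)
    (hRnorm : ∀ z ∈ sector θ, ‖R z‖ ≤ c₀ * ‖z‖ ^ (-α))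
    (k m : ℕ) (hm1 : 1 ≤ m) (hmk : m ≤ k) (hk6 : k ≤ 6) :
    ∃ c > (0 : ℝ), ∀ τ : ℝ, 0 < τ → ∀ z ∈ sector θ,
      ‖z‖ * τ ≤ π / Real.sin θ →
      bdfDelta τ k (Complex.exp (-z * τ)) ∈ sector θ →
        ‖(bdfDelta τ k (Complex.exp (-z * τ)) ^ m) • R (bdfDelta τ k (Complex.exp (-z * τ)))
            - (z ^ m) • R z‖ ≤
          c * τ ^ k * ‖z‖ ^ ((k : ℝ) + m - α) :=
  stmt12_general A α hα θ hθ hsin c₀ hc₀ R hR1 hR2 hRnorm k m hm1 hmk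
end
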